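/- Let h : ℝ → ℝ be bounded above by an affine function, ĥ its concave envelope, and x₀ ∈ ℝ. Then ĥ(x₀) = sup { ∫ h dμ : μ a probability measure on ℝ supported on at most two points with barycenter x₀ }, and this supremum equals the supremum over all finitely-supported probability measures with barycenter x₀ of ∫ h dμ. -/

import Mathlib

/-!
Every concave majorant `g` of `h` satisfies `∫ h dμ ≤ ∫ g dμ ≤ g (∫ y dμ)` by Jensen, so the
finitely-supported supremum is at most `ĥ x₀`. Conversely, let `M` be the two-point supremum at
`x₀`. Two-point measures on `z < x₀ < w` say that every chord of `h` across `x₀` lies below `M`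
at `x₀`, i.e. every slope of `h - M` from `x₀` to the right is at most every slope to the left;
a slope in between gives an affine majorant of `h` with value `M` at `x₀`, hence `ĥ x₀ ≤ M`.
-/

open MeasureTheory

/-- The concave envelope of `h`: the pointwise infimum of all concave functions dominating `h`. -/
noncomputable def concaveEnvelope (h : ℝ → ℝ) : ℝ → ℝ := fun x =>
  sInf {v : ℝ | ∃ g : ℝ → ℝ, ConcaveOn ℝ Set.univ g ∧ (∀ z, h z ≤ g z) ∧ g x = v}

def twoPointIntegrals (h : ℝ → ℝ) (x : ℝ) : Set ℝ :=
  {r : ℝ | ∃ μ : Measure ℝ, IsProbabilityMeasure μ ∧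
        (∃ s : Finset ℝ, s.card ≤ 2 ∧ μ ((↑s : Set ℝ)ᶜ) = 0) ∧
        (∫ y, y ∂μ) = x ∧ r = ∫ y, h y ∂μ}

def finiteSupportIntegrals (h : ℝ → ℝ) (x : ℝ) : Set ℝ :=
  {r : ℝ | ∃ μ : Measure ℝ, IsProbabilityMeasure μ ∧
        (∃ s : Finset ℝ, μ ((↑s : Set ℝ)ᶜ) = 0) ∧
        (∫ y, y ∂μ) = x ∧ r = ∫ y, h y ∂μ}

theorem concaveOn_affine (a c : ℝ) : ConcaveOn ℝ Set.univ fun y : ℝ => a + c * y :=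
  (concaveOn_const a convex_univ).add ((LinearMap.mulLeft ℝ c).concaveOn convex_univ)

theorem concaveEnvelope_le {h g : ℝ → ℝ} (hg : ConcaveOn ℝ Set.univ g) (hhg : ∀ z, h z ≤ g z)
    (x : ℝ) : concaveEnvelope h x ≤ g x :=
  csInf_le ⟨h x, by rintro _ ⟨g', -, hhg', rfl⟩; exact hhg' x⟩ ⟨g, hg, hhg, rfl⟩

-- The affine majorant keeps the infimum off the empty set, where `sInf ∅ = 0`.
theorem le_concaveEnvelope {h : ℝ → ℝ} {α β : ℝ} (hb : ∀ x, h x ≤ α + β * x) {r x : ℝ}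
    (H : ∀ g, ConcaveOn ℝ Set.univ g → (∀ z, h z ≤ g z) → r ≤ g x) :
    r ≤ concaveEnvelope h x :=
  le_csInf ⟨_, _, concaveOn_affine α β, hb, rfl⟩ (by rintro _ ⟨g, hg, hhg, rfl⟩; exact H g hg hhg)

theorem integrable_of_measure_compl_finset_eq_zero {X E : Type*} [MeasurableSpace X]
    [MeasurableSingletonClass X] [NormedAddCommGroup E] {μ : Measure X} [IsFiniteMeasure μ]
    {s : Finset X} (hs : μ (↑s)ᶜ = 0) (f : X → E) : Integrable f μ := by
  rw [← Measure.restrict_eq_self_of_ae_mem (μ := μ) (s := s) (ae_iff.mpr hs)]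
  exact IntegrableOn.finset (μ := μ) (f := f)

theorem integral_le_concaveEnvelope_integral {h : ℝ → ℝ} {α β : ℝ}
    (hb : ∀ x, h x ≤ α + β * x) {μ : Measure ℝ} [IsProbabilityMeasure μ] {s : Finset ℝ}
    (hs : μ (↑s)ᶜ = 0) : ∫ y, h y ∂μ ≤ concaveEnvelope h (∫ y, y ∂μ) := by
  refine le_concaveEnvelope hb fun g hg hhg => ?_
  have hint := integrable_of_measure_compl_finset_eq_zero hs (E := ℝ)
  calc ∫ y, h y ∂μ ≤ ∫ y, g y ∂μ := integral_mono (hint h) (hint g) hhg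
    _ ≤ g (∫ y, y ∂μ) := hg.le_map_integral (hg.continuousOn isOpen_univ) isClosed_univ
        (by simp) (hint id) (hint g)

theorem mem_twoPointIntegrals (h : ℝ → ℝ) {p : ℝ} (hp₀ : 0 ≤ p) (hp₁ : p ≤ 1) (z w : ℝ) :
    p * h z + (1 - p) * h w ∈ twoPointIntegrals h (p * z + (1 - p) * w) := by
  set μ := ENNReal.ofReal p • Measure.dirac z + ENNReal.ofReal (1 - p) • Measure.dirac w
  have integral_eq (f : ℝ → ℝ) : ∫ y, f y ∂μ = p * f z + (1 - p) * f w := by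
    rw [integral_add_measure ((integrable_dirac (by simp)).smul_measure ENNReal.ofReal_ne_top)
      ((integrable_dirac (by simp)).smul_measure ENNReal.ofReal_ne_top),
      integral_smul_measure, integral_smul_measure, integral_dirac, integral_dirac,
      ENNReal.toReal_ofReal hp₀, ENNReal.toReal_ofReal (sub_nonneg.mpr hp₁), smul_eq_mul,
      smul_eq_mul]
  refine ⟨μ, ⟨?_⟩, ⟨{z, w}, Finset.card_le_two, ?_⟩, integral_eq id, (integral_eq h).symm⟩
  · simp [μ, ← ENNReal.ofReal_add hp₀ (sub_nonneg.mpr hp₁)]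
  · simp [μ]

theorem exists_affine_majorant_of_forall_two_point_le {φ : ℝ → ℝ} {x M : ℝ}
    (H : ∀ p z w, 0 ≤ p → p ≤ 1 → p * z + (1 - p) * w = x → p * φ z + (1 - p) * φ w ≤ M) :
    ∃ c, ∀ y, φ y ≤ M + c * (y - x) := by
  set slopeAt := fun y => (φ y - M) / (y - x)
  have slopeAt_le : ∀ z w, z < x → x < w → slopeAt w ≤ slopeAt z := by
    intro z w hz hw
    have hwz : 0 < w - z := by linarith
    have hp : (w - x) / (w - z) * (w - z) = w - x := div_mul_cancel₀ _ hwz.ne'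
    have hchord := H ((w - x) / (w - z)) z w (div_nonneg (by linarith) hwz.le)
      ((div_le_one hwz).mpr (by linarith)) (by linear_combination (-1) * hp)
    field_simp at hchord
    simp only [slopeAt]
    rw [← neg_div_neg_eq (φ z - M), div_le_div_iff₀ (by linarith) (by linarith)]
    linarith
  have hbdd : BddAbove (slopeAt '' Set.Ioi x) :=
    ⟨slopeAt (x - 1), by rintro _ ⟨w, hw, rfl⟩; exact slopeAt_le _ _ (by linarith) hw⟩
  refine ⟨sSup (slopeAt '' Set.Ioi x), fun y => ?_⟩
  rcases lt_trichotomy y x with hy | rfl | hy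
  · have : sSup (slopeAt '' Set.Ioi x) ≤ slopeAt y :=
      csSup_le ⟨_, Set.mem_image_of_mem slopeAt (lt_add_one x)⟩
        (by rintro _ ⟨w, hw, rfl⟩; exact slopeAt_le _ _ hy hw)
    have hslope : slopeAt y * (y - x) = φ y - M := div_mul_cancel₀ _ (by linarith)
    linarith [mul_le_mul_of_nonpos_right this (sub_nonpos.mpr hy.le)]
  · simpa using H 1 y y zero_le_one le_rfl (by ring)
  · have : slopeAt y ≤ sSup (slopeAt '' Set.Ioi x) := le_csSup hbdd ⟨y, hy, rfl⟩
    have hslope : slopeAt y * (y - x) = φ y - M := div_mul_cancel₀ _ (by linarith)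
    linarith [mul_le_mul_of_nonneg_right this (sub_nonneg.mpr hy.le)]

/-- For `h` bounded above by an affine function, `ĥ(x₀)` equals the supremum of `∫ h dμ` over
probability measures `μ` supported on at most two points with barycenter `x₀`, and this in turn
equals the supremum over all finitely-supported probability measures with barycenter `x₀`. -/
theorem concaveEnvelope_eq_sup_two_point (h : ℝ → ℝ) (α β : ℝ)
    (hb : ∀ x, h x ≤ α + β * x) (x₀ : ℝ) :
    concaveEnvelope h x₀ =
      sSup {r : ℝ | ∃ μ : Measure ℝ, IsProbabilityMeasure μ ∧
        (∃ s : Finset ℝ, s.card ≤ 2 ∧ μ ((↑s : Set ℝ)ᶜ) = 0) ∧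
        (∫ y, y ∂μ) = x₀ ∧ r = ∫ y, h y ∂μ} ∧
    sSup {r : ℝ | ∃ μ : Measure ℝ, IsProbabilityMeasure μ ∧
        (∃ s : Finset ℝ, s.card ≤ 2 ∧ μ ((↑s : Set ℝ)ᶜ) = 0) ∧
        (∫ y, y ∂μ) = x₀ ∧ r = ∫ y, h y ∂μ} =
      sSup {r : ℝ | ∃ μ : Measure ℝ, IsProbabilityMeasure μ ∧
        (∃ s : Finset ℝ, μ ((↑s : Set ℝ)ᶜ) = 0) ∧
        (∫ y, y ∂μ) = x₀ ∧ r = ∫ y, h y ∂μ} := by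
  change concaveEnvelope h x₀ = sSup (twoPointIntegrals h x₀) ∧
    sSup (twoPointIntegrals h x₀) = sSup (finiteSupportIntegrals h x₀)
  have two_point_subset : twoPointIntegrals h x₀ ⊆ finiteSupportIntegrals h x₀ :=
    fun _ ⟨μ, hμ, ⟨s, _, hs⟩, hbar, hr⟩ => ⟨μ, hμ, ⟨s, hs⟩, hbar, hr⟩
  have two_point_nonempty : (twoPointIntegrals h x₀).Nonempty :=
    ⟨_, by simpa using mem_twoPointIntegrals h zero_le_one le_rfl x₀ x₀⟩
  have le_envelope : ∀ r ∈ finiteSupportIntegrals h x₀, r ≤ concaveEnvelope h x₀ := by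
    rintro _ ⟨μ, hμ, ⟨s, hs⟩, rfl, rfl⟩
    exact integral_le_concaveEnvelope_integral hb hs
  have two_point_bdd : BddAbove (twoPointIntegrals h x₀) :=
    ⟨_, fun r hr => le_envelope r (two_point_subset hr)⟩
  obtain ⟨c, hc⟩ := exists_affine_majorant_of_forall_two_point_le (φ := h) (x := x₀)
    fun p z w hp₀ hp₁ hx => le_csSup two_point_bdd (hx ▸ mem_twoPointIntegrals h hp₀ hp₁ z w)
  have envelope_le : concaveEnvelope h x₀ ≤ sSup (twoPointIntegrals h x₀) := by
    simpa using concaveEnvelope_le (concaveOn_affine (sSup (twoPointIntegrals h x₀) - c * x₀) c)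
      (fun y => (hc y).trans_eq (by ring)) x₀
  have two_point_le : sSup (twoPointIntegrals h x₀) ≤ sSup (finiteSupportIntegrals h x₀) :=
    csSup_le_csSup ⟨_, le_envelope⟩ two_point_nonempty two_point_subset
  have finite_le : sSup (finiteSupportIntegrals h x₀) ≤ concaveEnvelope h x₀ :=
    csSup_le (two_point_nonempty.mono two_point_subset) le_envelope
  exact ⟨le_antisymm envelope_le (two_point_le.trans finite_le),
    le_antisymm two_point_le (finite_le.trans envelope_le)⟩
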